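/- Let f : M → N be a morphism of Banach comodules over a K-Banach coalgebra C. Then (a) the preimage under f of any closed subcomodule of N is a closed subcomodule of M; in particular Ker(f) is a closed subcomodule; and (b) the closure of the image f(M) is a closed subcomodule of N. -/

import Mathlib

/-- An abstract model of the completed (projective) tensor product `V ⊗̂ W` of normed
spaces over a nonarchimedean field `K`: a Banach space `T` together with a continuous
bilinear map `tm` of norm `≤ 1` with dense span, satisfying the universal property of
the completed projective tensor product. -/
structure BTensor (K : Type) [NontriviallyNormedField K] (V W : Type)
    [NormedAddCommGroup V] [NormedSpace K V]
    [NormedAddCommGroup W] [NormedSpace K W] : Type 1 where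
  T : Type
  [grp : NormedAddCommGroup T]
  [mod : NormedSpace K T]
  [cpl : CompleteSpace T]
  tm : V →L[K] W →L[K] T
  tm_norm : ∀ v w, ‖tm v w‖ ≤ ‖v‖ * ‖w‖
  dense_span : Dense (Submodule.span K (Set.range fun p : V × W => (tm p.1) p.2) : Set T)
  lift : ∀ (Z : Type) [NormedAddCommGroup Z] [NormedSpace K Z] [CompleteSpace Z],
      (V →L[K] W →L[K] Z) → (T →L[K] Z)
  lift_tm : ∀ (Z : Type) [NormedAddCommGroup Z] [NormedSpace K Z] [CompleteSpace Z]
      (b : V →L[K] W →L[K] Z) (v : V) (w : W), lift Z b (tm v w) = b v w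
  lift_norm : ∀ (Z : Type) [NormedAddCommGroup Z] [NormedSpace K Z] [CompleteSpace Z]
      (b : V →L[K] W →L[K] Z), ‖lift Z b‖ ≤ ‖b‖

attribute [instance] BTensor.grp BTensor.mod BTensor.cpl

/-- `K` is discretely valued: the value group of `K` is generated by a uniformizer. -/
def DiscretelyValued (K : Type) [NontriviallyNormedField K] : Prop :=
  ∃ π : K, 0 < ‖π‖ ∧ ‖π‖ < 1 ∧ ∀ x : K, x ≠ 0 → ∃ n : ℤ, ‖x‖ = ‖π‖ ^ n

variable {K : Type} [NontriviallyNormedField K] [CompleteSpace K]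

/-- the map `(ε ⊗̄ id) : C ⊗̂ C → C`. -/
noncomputable def BTensor.counitL {C : Type} [NormedAddCommGroup C] [NormedSpace K C]
    [CompleteSpace C] (t : BTensor K C C) (ε : C →L[K] K) : t.T →L[K] C :=
  t.lift C ((ContinuousLinearMap.lsmul K K : K →L[K] C →L[K] C).comp ε)

/-- the map `(id ⊗̄ ε) : C ⊗̂ C → C`. -/
noncomputable def BTensor.counitR {C : Type} [NormedAddCommGroup C] [NormedSpace K C]
    [CompleteSpace C] (t : BTensor K C C) (ε : C →L[K] K) : t.T →L[K] C :=
  t.lift C (((ContinuousLinearMap.lsmul K K : K →L[K] C →L[K] C).comp ε).flip)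

/-- the map `(id_M ⊗̄ λ) : M ⊗̂ C → M` used to define the induced `C'`-module structure
`λ · m = (id_M ⊗̄ λ)(ρ_M m)` on a Banach comodule `M`. -/
noncomputable def BTensor.act {M C : Type} [NormedAddCommGroup M] [NormedSpace K M]
    [CompleteSpace M] [NormedAddCommGroup C] [NormedSpace K C]
    (tM : BTensor K M C) (lam : C →L[K] K) : tM.T →L[K] M :=
  tM.lift M (((ContinuousLinearMap.lsmul K K : K →L[K] M →L[K] M).comp lam).flip)

/-- the closed subspace `N ⊗̂ C` of `M ⊗̂ C` (closure of the span of elementary tensors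
with first factor in `N`). -/
def BTensor.subTensor {M C : Type} [NormedAddCommGroup M] [NormedSpace K M]
    [NormedAddCommGroup C] [NormedSpace K C]
    (tM : BTensor K M C) (N : Submodule K M) : Set tM.T :=
  closure (Submodule.span K {z : tM.T | ∃ n ∈ N, ∃ c : C, z = tM.tm n c} : Set tM.T)

/-! For the closure of the image, only the universal property is needed: `f ⊗̂ id` maps
`M ⊗̂ C` into the closure of `f(M) ⊗ C`, and `ρ_N ∘ f = (f ⊗̂ id) ∘ ρ_M`.

For preimages, the point is that `z ∈ M ⊗̂ C` lies in `L ⊗̂ C` as soon as every slice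
`(id ⊗ λ) z`, `λ ∈ C'`, lies in `L`. Approximate `z` by a finite sum of tensors `u` and pick a
finite-rank contraction `Φ = ∑ λᵢ ⊗ eᵢ` of `C` fixing the second factors of `u`; such `Φ` are
built from the nonarchimedean Hahn–Banach theorem, which holds because `K` is discretely
valued. Then `(id ⊗ Φ) z = ∑ (id ⊗ λᵢ) z ⊗ eᵢ` lies in `L ⊗ C` and within `2 ‖z - u‖` of `z`.
The slices of `ρ_M x` lie in `f⁻¹ L` when `f x ∈ L`, since `f` commutes with slicing. -/

variable {𝕜 : Type} [NontriviallyNormedField 𝕜]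

theorem DiscretelyValued.exists_norm_le_imp_norm_le (hdv : DiscretelyValued 𝕜) {ι : Type*}
    [Nonempty ι] {r : ι → ℝ} {d : ℝ} (hd : 0 < d) (hr : ∀ i, d ≤ r i) :
    ∃ i₀, ∀ i (a : 𝕜), ‖a‖ ≤ r i₀ → ‖a‖ ≤ r i := by
  obtain ⟨π, hπ0, hπ1, hval⟩ := hdv
  let S : Set ℤ := {k | ∀ i, ‖π‖ ^ k ≤ r i}
  have hS : ∃ k, k ∈ S := by
    obtain ⟨n, hn⟩ := exists_pow_lt_of_lt_one hd hπ1
    exact ⟨n, fun i => by rw [zpow_natCast]; exact hn.le.trans (hr i)⟩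
  have hS_bdd : ∃ b : ℤ, ∀ k ∈ S, b ≤ k := by
    obtain ⟨i₁⟩ := ‹Nonempty ι›
    obtain ⟨n, hn⟩ := exists_pow_lt_of_lt_one (inv_pos.2 (hd.trans_le (hr i₁))) hπ1
    refine ⟨-n, fun k hk => ?_⟩
    by_contra! hlt
    have : r i₁ < ‖π‖ ^ (-(n : ℤ)) := by
      rw [zpow_neg, zpow_natCast, lt_inv_comm₀ (hd.trans_le (hr i₁)) (by positivity)]
      exact hn
    linarith [zpow_lt_zpow_right_of_lt_one₀ hπ0 hπ1 hlt, hk i₁]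
  obtain ⟨k, hkS, hk_least⟩ := Int.exists_least_of_bdd hS_bdd hS
  obtain ⟨i₀, hi₀⟩ : ∃ i₀, r i₀ < ‖π‖ ^ (k - 1) := by
    by_contra! h
    linarith [hk_least (k - 1) h]
  refine ⟨i₀, fun i a ha => ?_⟩
  rcases eq_or_ne a 0 with rfl | ha0
  · simpa using (hd.trans_le (hr i)).le
  obtain ⟨m, hm⟩ := hval a ha0
  rw [hm] at ha ⊢
  have hkm : k ≤ m := by
    by_contra! hmk
    have := zpow_le_zpow_right_of_le_one₀ hπ0 hπ1.le (Int.le_sub_one_of_lt hmk)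
    linarith
  exact (zpow_le_zpow_right_of_le_one₀ hπ0 hπ1.le hkm).trans (hkS i)

section HahnBanach

variable {E : Type*} [NormedAddCommGroup E] [NormedSpace 𝕜 E]

def LinearPMap.IsBoundedBy (B : ℝ) (p : E →ₗ.[𝕜] 𝕜) : Prop :=
  ∀ x : p.domain, ‖p x‖ ≤ B * ‖(x : E)‖

theorem LinearPMap.IsBoundedBy.norm_sub_le {B : ℝ} {p : E →ₗ.[𝕜] 𝕜} (hp : p.IsBoundedBy B)
    (w w' : p.domain) : ‖p w - p w'‖ ≤ B * ‖(w : E) - w'‖ := by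
  simpa [LinearPMap.map_sub] using hp (w - w')

theorem LinearPMap.IsBoundedBy.exists_norm_sub_le [CompleteSpace 𝕜] (hdv : DiscretelyValued 𝕜)
    [IsUltrametricDist E] {B : ℝ} (hB : 0 < B) {p : E →ₗ.[𝕜] 𝕜} (hp : p.IsBoundedBy B) (c : E) :
    ∃ t : 𝕜, ∀ w : p.domain, ‖p w - t‖ ≤ B * ‖(w : E) - c‖ := by
  by_cases hcl : c ∈ _root_.closure (p.domain : Set E)
  · obtain ⟨x, hx, hxc⟩ := mem_closure_iff_seq_limit.1 hcl
    let u : ℕ → p.domain := fun n => ⟨x n, hx n⟩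
    have hlip : LipschitzWith ⟨B, hB.le⟩ fun w : p.domain => p w :=
      LipschitzWith.of_dist_le_mul fun w w' => by
        rw [dist_eq_norm, dist_eq_norm]
        exact hp.norm_sub_le w w'
    have hu : CauchySeq u := Metric.cauchySeq_iff.2 <| by
      simpa [u, Subtype.dist_eq] using Metric.cauchySeq_iff.1 hxc.cauchySeq
    obtain ⟨t, ht⟩ := cauchySeq_tendsto_of_complete (hlip.uniformContinuous.comp_cauchySeq hu)
    exact ⟨t, fun w => le_of_tendsto_of_tendsto' (tendsto_const_nhds.sub ht).norm
      ((tendsto_const_nhds.sub hxc).norm.const_mul B) fun n => hp.norm_sub_le w (u n)⟩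
  · obtain ⟨d, hd, hdist⟩ : ∃ d > 0, ∀ w : p.domain, d ≤ ‖(w : E) - c‖ := by
      simp only [Metric.mem_closure_iff, not_forall, not_exists, not_and, not_lt] at hcl
      obtain ⟨d, hd, h⟩ := hcl
      exact ⟨d, hd, fun w => by simpa [dist_eq_norm'] using h w w.2⟩
    -- discreteness of the value group: one ball `B(p w₀, B ‖w₀ - c‖)` lies in all the others
    obtain ⟨w₀, hw₀⟩ := hdv.exists_norm_le_imp_norm_le
      (r := fun w : p.domain => B * ‖(w : E) - c‖) (mul_pos hB hd)
      fun w => mul_le_mul_of_nonneg_left (hdist w) hB.le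
    refine ⟨p w₀, fun w => ?_⟩
    have hmax : ‖p w - p w₀‖ ≤ max (B * ‖(w : E) - c‖) (B * ‖(w₀ : E) - c‖) := by
      refine (hp.norm_sub_le w w₀).trans ?_
      rw [← mul_max_of_nonneg _ _ hB.le, ← dist_eq_norm, ← dist_eq_norm, ← dist_eq_norm,
        dist_comm (w₀ : E)]
      exact mul_le_mul_of_nonneg_left (dist_triangle_max _ _ _) hB.le
    exact (le_max_iff.1 hmax).elim id (hw₀ w _)

theorem LinearPMap.IsBoundedBy.supSpanSingleton {B : ℝ} {p : E →ₗ.[𝕜] 𝕜} (hp : p.IsBoundedBy B)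
    {c : E} (hc : c ∉ p.domain) {t : 𝕜} (ht : ∀ w : p.domain, ‖p w - t‖ ≤ B * ‖(w : E) - c‖) :
    (p.supSpanSingleton c t hc).IsBoundedBy B := by
  rintro ⟨x, hx⟩
  obtain ⟨v, hv, _, hz, rfl⟩ := Submodule.mem_sup.1 hx
  obtain ⟨a, rfl⟩ := Submodule.mem_span_singleton.1 hz
  rw [p.supSpanSingleton_apply_mk c t hc v hv a, smul_eq_mul, RingHom.id_apply]
  change _ ≤ B * ‖v + a • c‖
  rcases eq_or_ne a 0 with rfl | ha
  · simpa using hp ⟨v, hv⟩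
  set w : p.domain := (-a⁻¹) • ⟨v, hv⟩
  have h1 : p ⟨v, hv⟩ + a * t = -a * (p w - t) := by
    rw [LinearPMap.map_smul, smul_eq_mul]
    field_simp
    ring
  have h2 : v + a • c = -a • ((w : E) - c) := by
    rw [Submodule.coe_smul, smul_sub, smul_smul]
    field_simp
    simp
  rw [h1, h2, norm_mul, norm_smul, mul_left_comm]
  exact mul_le_mul_of_nonneg_left (ht w) (norm_nonneg _)

theorem LinearPMap.isBoundedBy_sSup {B : ℝ} {c : Set (E →ₗ.[𝕜] 𝕜)} (hne : c.Nonempty)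
    (hc : DirectedOn (· ≤ ·) c) (hcB : ∀ p ∈ c, p.IsBoundedBy B) :
    (LinearPMap.sSup c hc).IsBoundedBy B := by
  rintro ⟨x, hx⟩
  obtain ⟨p, hp, hxp⟩ := (LinearPMap.mem_domain_sSup_iff hne hc).1 hx
  rw [LinearPMap.sSup_apply hc hp ⟨x, hxp⟩]
  exact hcB p hp ⟨x, hxp⟩

theorem LinearPMap.IsBoundedBy.exists_extension [CompleteSpace 𝕜] (hdv : DiscretelyValued 𝕜)
    [IsUltrametricDist E] {B : ℝ} (hB : 0 < B) {p : E →ₗ.[𝕜] 𝕜} (hp : p.IsBoundedBy B) :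
    ∃ f : E →L[𝕜] 𝕜, (∀ x : p.domain, f x = p x) ∧ ∀ x, ‖f x‖ ≤ B * ‖x‖ := by
  obtain ⟨q, hpq, hqB, hq_max⟩ := zorn_le_nonempty₀ {q : E →ₗ.[𝕜] 𝕜 | q.IsBoundedBy B}
    (fun c hcB hchain y hy => ⟨_, LinearPMap.isBoundedBy_sSup ⟨y, hy⟩ hchain.directedOn hcB,
      fun _ => LinearPMap.le_sSup hchain.directedOn⟩) p hp
  have hq_top : ∀ x, x ∈ q.domain := by
    by_contra! ⟨c, hc⟩
    obtain ⟨t, ht⟩ := hqB.exists_norm_sub_le hdv hB c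
    have hle := hq_max (hqB.supSpanSingleton hc ht) (LinearPMap.left_le_sup _ _ _)
    exact hc (hle.1 (Submodule.mem_sup_right (Submodule.mem_span_singleton_self c)))
  let f : E →ₗ[𝕜] 𝕜 := q.toFun.comp (LinearMap.codRestrict q.domain LinearMap.id hq_top)
  exact ⟨f.mkContinuous B fun x => hqB ⟨x, hq_top x⟩, fun x => (hpq.2 rfl).symm,
    fun x => hqB ⟨x, hq_top x⟩⟩

theorem DiscretelyValued.exists_dual_eq_one [CompleteSpace 𝕜] (hdv : DiscretelyValued 𝕜)
    [IsUltrametricDist E] {e : E} (he : e ≠ 0) :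
    ∃ f : E →L[𝕜] 𝕜, f e = 1 ∧ ∀ x, ‖f x‖ * ‖e‖ ≤ ‖x‖ := by
  have he' : 0 < ‖e‖ := norm_pos_iff.2 he
  let p : E →ₗ.[𝕜] 𝕜 := LinearPMap.mkSpanSingleton e 1 he
  have hB : p.IsBoundedBy ‖e‖⁻¹ := by
    rintro ⟨x, hx⟩
    obtain ⟨a, rfl⟩ := Submodule.mem_span_singleton.1 hx
    rw [LinearPMap.mkSpanSingleton'_apply, smul_eq_mul, mul_one, RingHom.id_apply]
    change ‖a‖ ≤ ‖e‖⁻¹ * ‖a • e‖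
    rw [norm_smul, mul_comm, mul_inv_cancel_right₀ he'.ne']
  obtain ⟨f, hf_ext, hf_bound⟩ := hB.exists_extension hdv (inv_pos.2 he')
  refine ⟨f, ?_, fun x => ?_⟩
  · exact (hf_ext ⟨e, Submodule.mem_span_singleton_self e⟩).trans
      (LinearPMap.mkSpanSingleton_apply 𝕜 𝕜 he 1)
  · rw [← le_div_iff₀ he', div_eq_inv_mul]
    exact hf_bound x

theorem DiscretelyValued.exists_finiteRank_contraction_eqOn [CompleteSpace 𝕜]
    (hdv : DiscretelyValued 𝕜) [IsUltrametricDist E] (s : Finset E) :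
    ∃ (n : ℕ) (f : Fin n → E →L[𝕜] 𝕜) (e : Fin n → E),
      (∀ x, ‖∑ i, f i x • e i‖ ≤ ‖x‖) ∧ ∀ c ∈ s, ∑ i, f i c • e i = c := by
  classical
  induction s using Finset.induction_on with
  | empty => exact ⟨0, Fin.elim0, Fin.elim0, by simp, by simp⟩
  | insert c s _ ih =>
    obtain ⟨n, f, e, hnorm, hfix⟩ := ih
    set Φ : E →L[𝕜] E := ∑ i, (f i).smulRight (e i) with hΦ
    have hΦ_apply : ∀ x, Φ x = ∑ i, f i x • e i := by simp [hΦ]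
    by_cases hc : Φ c = c
    · exact ⟨n, f, e, hnorm, Finset.forall_mem_insert _ _ _ |>.2 ⟨by rwa [← hΦ_apply], hfix⟩⟩
    -- add the rank-one correction `x ↦ g (x - Φ x) • (c - Φ c)`, where `g (c - Φ c) = 1`
    obtain ⟨g, hg_one, hg_norm⟩ := hdv.exists_dual_eq_one (sub_ne_zero.2 (Ne.symm hc))
    refine ⟨n + 1, Fin.cons (g.comp (ContinuousLinearMap.id 𝕜 E - Φ)) f, Fin.cons (c - Φ c) e,
      fun x => ?_, ?_⟩
    · simp only [Fin.sum_univ_succ, Fin.cons_zero, Fin.cons_succ, ContinuousLinearMap.comp_apply,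
        sub_apply, ContinuousLinearMap.id_apply, ← hΦ_apply]
      have hΦx : ‖Φ x‖ ≤ ‖x‖ := hΦ_apply x ▸ hnorm x
      have hsub : ‖x - Φ x‖ ≤ max ‖x‖ ‖Φ x‖ := by
        simpa [sub_eq_add_neg] using IsUltrametricDist.norm_add_le_max x (-Φ x)
      refine (IsUltrametricDist.norm_add_le_max _ _).trans (max_le ?_ hΦx)
      rw [norm_smul]
      exact (hg_norm _).trans (hsub.trans (max_le le_rfl hΦx))
    · simp only [Finset.forall_mem_insert, Fin.sum_univ_succ, Fin.cons_zero, Fin.cons_succ,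
        ContinuousLinearMap.comp_apply, sub_apply, ContinuousLinearMap.id_apply, ← hΦ_apply]
      refine ⟨by rw [hg_one, one_smul, sub_add_cancel], fun c' hc' => ?_⟩
      rw [hΦ_apply, hfix c' hc', sub_self, map_zero, zero_smul, zero_add]

end HahnBanach

namespace BTensor

section Slices

variable {V W : Type} [NormedAddCommGroup V] [NormedSpace 𝕜 V] [NormedAddCommGroup W]
  [NormedSpace 𝕜 W] (t : BTensor 𝕜 V W)

theorem mem_of_forall_tm_mem {S : Submodule 𝕜 t.T} (hS : IsClosed (S : Set t.T))
    (h : ∀ v w, t.tm v w ∈ S) (z : t.T) : z ∈ S := by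
  have : Submodule.span 𝕜 (Set.range fun p : V × W => t.tm p.1 p.2) ≤ S :=
    Submodule.span_le.2 (Set.range_subset_iff.2 fun p => h p.1 p.2)
  exact closure_minimal this hS (t.dense_span z)

theorem ext_tm {Z : Type*} [NormedAddCommGroup Z] [NormedSpace 𝕜 Z] {g h : t.T →L[𝕜] Z}
    (H : ∀ v w, g (t.tm v w) = h (t.tm v w)) : g = h := by
  ext z
  have hz := t.mem_of_forall_tm_mem (S := (g - h : t.T →L[𝕜] Z).ker) (g - h).isClosed_ker
    (fun v w => by simp [H]) z
  simpa [sub_eq_zero] using hz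

theorem exists_finset_sum_of_mem_span {u : t.T}
    (hu : u ∈ Submodule.span 𝕜 (Set.range fun p : V × W => t.tm p.1 p.2)) :
    ∃ (s : Finset (V × W)) (v : V × W → V), u = ∑ p ∈ s, t.tm (v p) p.2 := by
  obtain ⟨a, rfl⟩ := Finsupp.mem_span_range_iff_exists_finsupp.1 hu
  exact ⟨a.support, fun p => a p • p.1, by simp [Finsupp.sum]⟩

noncomputable def mapRight (Φ : W →L[𝕜] W) : t.T →L[𝕜] t.T :=
  t.lift t.T (t.tm.flip.comp Φ).flip

@[simp]
theorem mapRight_tm (Φ : W →L[𝕜] W) (v : V) (w : W) :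
    t.mapRight Φ (t.tm v w) = t.tm v (Φ w) :=
  t.lift_tm _ _ v w

theorem norm_mapRight_le (Φ : W →L[𝕜] W) : ‖t.mapRight Φ‖ ≤ ‖Φ‖ := by
  refine (t.lift_norm _ _).trans <|
    ContinuousLinearMap.opNorm_le_bound₂ _ (norm_nonneg Φ) fun v w => ?_
  calc ‖t.tm v (Φ w)‖ ≤ ‖v‖ * ‖Φ w‖ := t.tm_norm v (Φ w)
    _ ≤ ‖Φ‖ * ‖v‖ * ‖w‖ := by
      rw [mul_assoc, mul_left_comm]
      exact mul_le_mul_of_nonneg_left (Φ.le_opNorm w) (norm_nonneg v)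

@[simp]
theorem act_tm [CompleteSpace V] (f : W →L[𝕜] 𝕜) (v : V) (w : W) :
    t.act f (t.tm v w) = f w • v :=
  t.lift_tm _ _ v w

theorem mapRight_sum_smulRight_apply [CompleteSpace V] {ι : Type*} (s : Finset ι)
    (f : ι → W →L[𝕜] 𝕜) (e : ι → W) (z : t.T) :
    t.mapRight (∑ i ∈ s, (f i).smulRight (e i)) z = ∑ i ∈ s, t.tm (t.act (f i) z) (e i) := by
  have : t.mapRight (∑ i ∈ s, (f i).smulRight (e i)) =
      ∑ i ∈ s, (t.tm.flip (e i)).comp (t.act (f i)) :=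
    t.ext_tm fun v w => by simp [map_sum]
  rw [this, FunLike.coe_sum, Finset.sum_apply]
  rfl

theorem act_mem_of_mem_subTensor [CompleteSpace V] {L : Submodule 𝕜 V}
    (hL : IsClosed (L : Set V)) (f : W →L[𝕜] 𝕜) {z : t.T} (hz : z ∈ t.subTensor L) :
    t.act f z ∈ L := by
  have hspan : Submodule.span 𝕜 {z : t.T | ∃ v ∈ L, ∃ w, z = t.tm v w} ≤
      L.comap (t.act f : t.T →ₗ[𝕜] V) :=
    Submodule.span_le.2 fun _ ⟨v, hv, w, hz⟩ => by simpa [hz] using L.smul_mem (f w) hv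
  exact closure_minimal hspan (hL.preimage (t.act f).continuous) hz

theorem mem_subTensor_of_forall_act_mem [CompleteSpace 𝕜] [CompleteSpace V]
    (hdv : DiscretelyValued 𝕜) [IsUltrametricDist W] {L : Submodule 𝕜 V} {z : t.T}
    (hz : ∀ f : W →L[𝕜] 𝕜, t.act f z ∈ L) : z ∈ t.subTensor L := by
  classical
  refine Metric.mem_closure_iff.2 fun r hr => ?_
  obtain ⟨u, hu, hzu⟩ := Metric.mem_closure_iff.1 (t.dense_span z) (r / 2) (half_pos hr)
  obtain ⟨s, v, hsv⟩ := t.exists_finset_sum_of_mem_span hu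
  obtain ⟨n, f, e, hΦ_norm, hΦ_fix⟩ := hdv.exists_finiteRank_contraction_eqOn (s.image Prod.snd)
  let P := t.mapRight (∑ i, (f i).smulRight (e i))
  have hP : ‖P‖ ≤ 1 := (t.norm_mapRight_le _).trans <|
    ContinuousLinearMap.opNorm_le_bound _ zero_le_one fun x => by simpa using hΦ_norm x
  have hPu : P u = u := by
    rw [hsv, map_sum]
    refine Finset.sum_congr rfl fun p hp => ?_
    rw [mapRight_tm]
    congr 1
    simpa using hΦ_fix p.2 (Finset.mem_image_of_mem _ hp)
  refine ⟨P z, ?_, ?_⟩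
  · rw [SetLike.mem_coe, mapRight_sum_smulRight_apply]
    exact Submodule.sum_mem _ fun i _ => Submodule.subset_span ⟨_, hz (f i), e i, rfl⟩
  · have hPuz : dist (P u) (P z) ≤ dist u z := by
      simpa [dist_eq_norm, ← map_sub] using P.le_of_opNorm_le hP (u - z)
    calc dist z (P z) ≤ dist z u + dist u (P z) := dist_triangle _ _ _
      _ = dist z u + dist (P u) (P z) := by rw [hPu]
      _ < r := by linarith [dist_comm u z]

end Slices

section ComoduleMorphism

variable {M N C : Type} [NormedAddCommGroup M] [NormedSpace 𝕜 M] [NormedAddCommGroup N]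
  [NormedSpace 𝕜 N] [NormedAddCommGroup C] [NormedSpace 𝕜 C]

theorem isClosed_subTensor (t : BTensor 𝕜 M C) (L : Submodule 𝕜 M) :
    IsClosed (t.subTensor L) :=
  isClosed_closure

theorem subTensor_mono (t : BTensor 𝕜 M C) {L L' : Submodule 𝕜 M} (h : L ≤ L') :
    t.subTensor L ⊆ t.subTensor L' :=
  closure_mono <| Submodule.span_mono fun _ ⟨m, hm, c, hz⟩ => ⟨m, h hm, c, hz⟩

variable (tM : BTensor 𝕜 M C) (tN : BTensor 𝕜 N C) (f : M →L[𝕜] N)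

theorem lift_tm_comp_tm (m : M) (c : C) :
    tM.lift tN.T (tN.tm.comp f) (tM.tm m c) = tN.tm (f m) c :=
  tM.lift_tm _ _ m c

theorem act_lift_tm_comp [CompleteSpace M] [CompleteSpace N] (g : C →L[𝕜] 𝕜) (z : tM.T) :
    tN.act g (tM.lift tN.T (tN.tm.comp f) z) = f (tM.act g z) := by
  have : (tN.act g).comp (tM.lift tN.T (tN.tm.comp f)) = f.comp (tM.act g) :=
    tM.ext_tm fun m c => by simp [lift_tm_comp_tm]
  exact congr($this z)

theorem lift_tm_comp_mem_subTensor_range (z : tM.T) :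
    tM.lift tN.T (tN.tm.comp f) z ∈ tN.subTensor (LinearMap.range (f : M →ₗ[𝕜] N)) := by
  let g := tM.lift tN.T (tN.tm.comp f)
  let S := Submodule.span 𝕜
    {w : tN.T | ∃ n ∈ LinearMap.range (f : M →ₗ[𝕜] N), ∃ c, w = tN.tm n c}
  refine tM.mem_of_forall_tm_mem (S := S.topologicalClosure.comap (g : tM.T →ₗ[𝕜] tN.T))
    (S.isClosed_topologicalClosure.preimage g.continuous) (fun m c => ?_) z
  rw [Submodule.mem_comap, ContinuousLinearMap.coe_coe, lift_tm_comp_tm]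
  exact Submodule.le_topologicalClosure _ (Submodule.subset_span ⟨f m, ⟨m, rfl⟩, c, rfl⟩)

variable {tM tN f} {ρM : M →L[𝕜] tM.T} {ρN : N →L[𝕜] tN.T}

theorem mem_subTensor_comap [CompleteSpace 𝕜] [CompleteSpace M] [CompleteSpace N]
    (hdv : DiscretelyValued 𝕜) [IsUltrametricDist C]
    (hf : (tM.lift tN.T (tN.tm.comp f)).comp ρM = ρN.comp f) {L : Submodule 𝕜 N}
    (hL : IsClosed (L : Set N)) (hLρ : ∀ y ∈ L, ρN y ∈ tN.subTensor L)
    {x : M} (hx : x ∈ L.comap (f : M →ₗ[𝕜] N)) :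
    ρM x ∈ tM.subTensor (L.comap (f : M →ₗ[𝕜] N)) := by
  refine tM.mem_subTensor_of_forall_act_mem hdv fun g => ?_
  change f (tM.act g (ρM x)) ∈ L
  have hfx : tM.lift tN.T (tN.tm.comp f) (ρM x) = ρN (f x) := DFunLike.congr_fun hf x
  rw [← act_lift_tm_comp, hfx]
  exact tN.act_mem_of_mem_subTensor hL g (hLρ _ hx)

theorem mem_subTensor_closure_range
    (hf : (tM.lift tN.T (tN.tm.comp f)).comp ρM = ρN.comp f) {y : N}
    (hy : y ∈ (LinearMap.range (f : M →ₗ[𝕜] N)).topologicalClosure) :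
    ρN y ∈ tN.subTensor (LinearMap.range (f : M →ₗ[𝕜] N)).topologicalClosure := by
  have hrange : Set.range f ⊆
      ρN ⁻¹' tN.subTensor (LinearMap.range (f : M →ₗ[𝕜] N)).topologicalClosure := by
    rintro _ ⟨x, rfl⟩
    rw [Set.mem_preimage, ← ContinuousLinearMap.comp_apply, ← hf,
      ContinuousLinearMap.comp_apply]
    exact tN.subTensor_mono (Submodule.le_topologicalClosure _)
      (lift_tm_comp_mem_subTensor_range tM tN f (ρM x))
  rw [← SetLike.mem_coe, Submodule.topologicalClosure_coe] at hy
  exact closure_minimal hrange ((tN.isClosed_subTensor _).preimage ρN.continuous) hy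

end ComoduleMorphism

end BTensor

theorem comodule_morphism_preimage_and_image_general
    (hdv : DiscretelyValued K)
    (C : Type) [NormedAddCommGroup C] [NormedSpace K C]
    [IsUltrametricDist C]
    (M : Type) [NormedAddCommGroup M] [NormedSpace K M] [CompleteSpace M]
    (N : Type) [NormedAddCommGroup N] [NormedSpace K N] [CompleteSpace N]
    -- the comodules `M` and `N`
    (tM : BTensor K M C) (ρM : M →L[K] tM.T)
    (tN : BTensor K N C) (ρN : N →L[K] tN.T)
    -- `f` is a comodule morphism: `(f ⊗̂ id_C) ∘ ρ_M = ρ_N ∘ f`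
    (f : M →L[K] N)
    (hf : (tM.lift tN.T (tN.tm.comp f)).comp ρM = ρN.comp f) :
    -- (a) preimages of closed subcomodules are closed subcomodules
    (∀ L : Submodule K N, IsClosed (L : Set N) → (∀ y ∈ L, ρN y ∈ tN.subTensor L) →
      IsClosed ((L.comap (f : M →ₗ[K] N) : Submodule K M) : Set M) ∧
      ∀ x ∈ L.comap (f : M →ₗ[K] N), ρM x ∈ tM.subTensor (L.comap (f : M →ₗ[K] N))) ∧
    -- in particular the kernel of `f` is a closed subcomodule
    (IsClosed ((LinearMap.ker (f : M →ₗ[K] N) : Submodule K M) : Set M) ∧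
      ∀ x ∈ LinearMap.ker (f : M →ₗ[K] N), ρM x ∈ tM.subTensor (LinearMap.ker (f : M →ₗ[K] N))) ∧
    -- (b) the closure of the image of `f` is a closed subcomodule
    (∀ y ∈ (LinearMap.range (f : M →ₗ[K] N)).topologicalClosure, ρN y ∈
      tN.subTensor (LinearMap.range (f : M →ₗ[K] N)).topologicalClosure) := by
  have hbot_closed : IsClosed ((⊥ : Submodule K N) : Set N) := by
    rw [Submodule.bot_coe]
    exact isClosed_singleton
  have hbot : ∀ y ∈ (⊥ : Submodule K N), ρN y ∈ tN.subTensor ⊥ := fun y hy => by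
    rw [(Submodule.mem_bot K).1 hy, map_zero]
    exact subset_closure (Submodule.zero_mem _)
  refine ⟨fun L hL hLρ => ⟨hL.preimage f.continuous,
      fun _ => BTensor.mem_subTensor_comap hdv hf hL hLρ⟩,
    ⟨f.isClosed_ker, fun _ => BTensor.mem_subTensor_comap hdv hf hbot_closed hbot⟩,
    fun _ => BTensor.mem_subTensor_closure_range hf⟩

/-- Let `f : M → N` be a morphism of Banach comodules over a `K`-Banach
coalgebra `C`.  Then (a) the preimage under `f` of any closed subcomodule of `N` is a
closed subcomodule of `M` (in particular `Ker f` is a closed subcomodule), and (b) the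
closure of the image `f(M)` is a closed subcomodule of `N`. -/
theorem comodule_morphism_preimage_and_image
    [IsUltrametricDist K] (hdv : DiscretelyValued K)
    (C : Type) [NormedAddCommGroup C] [NormedSpace K C] [CompleteSpace C]
    [IsUltrametricDist C]
    (M : Type) [NormedAddCommGroup M] [NormedSpace K M] [CompleteSpace M]
    [IsUltrametricDist M]
    (N : Type) [NormedAddCommGroup N] [NormedSpace K N] [CompleteSpace N]
    [IsUltrametricDist N]
    -- the coalgebra `C`
    (t : BTensor K C C) (Δ : C →L[K] t.T) (ε : C →L[K] K)
    (hcounitL : (t.counitL ε).comp Δ = ContinuousLinearMap.id K C)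
    (hcounitR : (t.counitR ε).comp Δ = ContinuousLinearMap.id K C)
    -- the comodules `M` and `N`
    (tM : BTensor K M C) (ρM : M →L[K] tM.T)
    (hMcounit : (tM.act ε).comp ρM = ContinuousLinearMap.id K M)
    (tN : BTensor K N C) (ρN : N →L[K] tN.T)
    (hNcounit : (tN.act ε).comp ρN = ContinuousLinearMap.id K N)
    -- `f` is a comodule morphism: `(f ⊗̂ id_C) ∘ ρ_M = ρ_N ∘ f`
    (f : M →L[K] N)
    (hf : (tM.lift tN.T (tN.tm.comp f)).comp ρM = ρN.comp f) :
    -- (a) preimages of closed subcomodules are closed subcomodules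
    (∀ L : Submodule K N, IsClosed (L : Set N) → (∀ y ∈ L, ρN y ∈ tN.subTensor L) →
      IsClosed ((L.comap (f : M →ₗ[K] N) : Submodule K M) : Set M) ∧
      ∀ x ∈ L.comap (f : M →ₗ[K] N), ρM x ∈ tM.subTensor (L.comap (f : M →ₗ[K] N))) ∧
    -- in particular the kernel of `f` is a closed subcomodule
    (IsClosed ((LinearMap.ker (f : M →ₗ[K] N) : Submodule K M) : Set M) ∧
      ∀ x ∈ LinearMap.ker (f : M →ₗ[K] N), ρM x ∈ tM.subTensor (LinearMap.ker (f : M →ₗ[K] N))) ∧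
    -- (b) the closure of the image of `f` is a closed subcomodule
    (∀ y ∈ (LinearMap.range (f : M →ₗ[K] N)).topologicalClosure, ρN y ∈
      tN.subTensor (LinearMap.range (f : M →ₗ[K] N)).topologicalClosure) :=
  comodule_morphism_preimage_and_image_general hdv C M N tM ρM tN ρN f hf
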